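/- arXiv:1812.10193 — 4 statements merged into one kernel-verified Lean document; each statement's English description precedes it below -/
import Mathlib

section
/- Let (Ω, P) be a probability space, 𝒳 a measurable space, X : Ω → 𝒳 a measurable map, and G : 𝒳 → 𝒳 a measurable map. Let μ = X_*P be the law of the original data and ν = (G ∘ X)_*P the law of the perturbed data, and let ε, δ, β ≥ 0 be real numbers such that |μ(C) − ν(C)| ≤ β for every measurable set C ⊆ 𝒳. Let f, g, y : 𝒳 → Bool be measurable, with P({ω : f(X(ω)) = y(X(ω))}) ≥ 1 − ε and P({ω : g(X(ω)) = y(X(ω))}) ≥ 1 − ε. If P({ω : g(X(ω)) ≠ g(G(X(ω)))}) ≥ 1 − δ, then P({ω : f(X(ω)) ≠ f(G(X(ω)))}) ≥ 1 − δ − 4ε − β. -/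
/-!
On the event that `f` and `g` agree at both `X` and `G ∘ X` and `g` is fooled, `f` is fooled
too. Both classifiers agree with `y` off a set of probability `2ε`, so they agree with each
other at `X` with probability at least `1 - 2ε`, and, since `{f = g}` is one of the sets
controlled by the total variation bound, at `G ∘ X` with probability at least `1 - 2ε - β`.
Intersecting these two events with the fooling event of `g` costs at most
`2ε + (2ε + β) + δ`.
-/

open MeasureTheory

namespace MeasureTheory

variable {Ω : Type*} [MeasurableSpace Ω] {P : Measure Ω}

theorem measureReal_add_measureReal_sub_one_le_inter [IsProbabilityMeasure P] (s : Set Ω)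
    {t : Set Ω} (ht : MeasurableSet t) :
    P.real s + P.real t - 1 ≤ P.real (s ∩ t) := by
  have h_union := measureReal_union_add_inter (μ := P) (s := s) ht
  have h_le_one := measureReal_le_one (μ := P) (s := s ∪ t)
  linarith

theorem measureReal_setOf_eq_ge_of_eq_of_eq [IsProbabilityMeasure P] {α : Type*}
    {u v w : Ω → α} (hvw : MeasurableSet {ω | v ω = w ω}) :
    P.real {ω | u ω = w ω} + P.real {ω | v ω = w ω} - 1 ≤ P.real {ω | u ω = v ω} :=
  (measureReal_add_measureReal_sub_one_le_inter _ hvw).trans <|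
    measureReal_mono fun _ ⟨huw, hvw⟩ => huw.trans hvw.symm

theorem measureReal_preimage_sub_le_of_abs_map_sub_le [IsFiniteMeasure P] {𝒳 : Type*}
    [MeasurableSpace 𝒳] {X Y : Ω → 𝒳} (hX : Measurable X) (hY : Measurable Y) {β : ℝ}
    (hTV : ∀ C : Set 𝒳, MeasurableSet C → |(P.map X).real C - (P.map Y).real C| ≤ β)
    {C : Set 𝒳} (hC : MeasurableSet C) :
    P.real (X ⁻¹' C) - β ≤ P.real (Y ⁻¹' C) := by
  have h := hTV C hC
  rw [map_measureReal_apply hX hC, map_measureReal_apply hY hC] at h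
  linarith [(abs_le.mp h).2]

end MeasureTheory

theorem stmt0_general
    {Ω 𝒳 : Type*} [MeasurableSpace Ω] [MeasurableSpace 𝒳]
    (P : Measure Ω) [IsProbabilityMeasure P]
    (X : Ω → 𝒳) (hX : Measurable X)
    (G : 𝒳 → 𝒳) (hG : Measurable G)
    (ε δ β : ℝ)
    (hTV : ∀ C : Set 𝒳, MeasurableSet C →
      |((P.map X) C).toReal - ((P.map (G ∘ X)) C).toReal| ≤ β)
    (f g y : 𝒳 → Bool) (hf : Measurable f) (hg : Measurable g) (hy : Measurable y)
    (hfacc : (P {ω | f (X ω) = y (X ω)}).toReal ≥ 1 - ε)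
    (hgacc : (P {ω | g (X ω) = y (X ω)}).toReal ≥ 1 - ε)
    (hfool : (P {ω | g (X ω) ≠ g (G (X ω))}).toReal ≥ 1 - δ) :
    (P {ω | f (X ω) ≠ f (G (X ω))}).toReal ≥ 1 - δ - 4 * ε - β := by
  simp only [← measureReal_def] at hTV hfacc hgacc hfool ⊢
  set agree : Set 𝒳 := {x | f x = g x}
  have h_agree : MeasurableSet agree := measurableSet_eq_fun hf hg
  have h_agree_before : 1 - 2 * ε ≤ P.real (X ⁻¹' agree) := by
    have h := measureReal_setOf_eq_ge_of_eq_of_eq (P := P) (u := fun ω => f (X ω))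
      (v := fun ω => g (X ω)) (w := fun ω => y (X ω))
      (measurableSet_eq_fun (hg.comp hX) (hy.comp hX))
    exact le_trans (by linarith) h
  have h_agree_after : 1 - 2 * ε - β ≤ P.real ((G ∘ X) ⁻¹' agree) := by
    linarith [measureReal_preimage_sub_le_of_abs_map_sub_le hX (hG.comp hX) hTV h_agree]
  set g_fooled : Set Ω := {ω | g (X ω) ≠ g (G (X ω))}
  have h_g_fooled : MeasurableSet g_fooled :=
    (measurableSet_eq_fun (hg.comp hX) (hg.comp (hG.comp hX))).compl
  have h_f_fooled : X ⁻¹' agree ∩ g_fooled ∩ (G ∘ X) ⁻¹' agree ⊆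
      {ω | f (X ω) ≠ f (G (X ω))} :=
    fun _ ⟨⟨hfg, hg_ne⟩, hfg'⟩ hf_eq => hg_ne (hfg.symm.trans (hf_eq.trans hfg'))
  linarith [measureReal_add_measureReal_sub_one_le_inter (P := P) (X ⁻¹' agree) h_g_fooled,
    measureReal_add_measureReal_sub_one_le_inter (P := P) (X ⁻¹' agree ∩ g_fooled)
      ((hG.comp hX) h_agree),
    measureReal_mono (μ := P) h_f_fooled]

/-- Theorem 4 (transferability): if the perturbed-data distribution is within total
variation `β` of the original-data distribution, classifiers `f` and `g` each have
accuracy at least `1 - ε` against the ground truth `y` on the original data, and the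
perturbation `G` fools `g` with probability at least `1 - δ`, then it fools `f` with
probability at least `1 - δ - 4ε - β`. -/
theorem stmt0
    {Ω 𝒳 : Type*} [MeasurableSpace Ω] [MeasurableSpace 𝒳]
    (P : Measure Ω) [IsProbabilityMeasure P]
    (X : Ω → 𝒳) (hX : Measurable X)
    (G : 𝒳 → 𝒳) (hG : Measurable G)
    (ε δ β : ℝ) (hε : 0 ≤ ε) (hδ : 0 ≤ δ) (hβ : 0 ≤ β)
    (hTV : ∀ C : Set 𝒳, MeasurableSet C →
      |((P.map X) C).toReal - ((P.map (G ∘ X)) C).toReal| ≤ β)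
    (f g y : 𝒳 → Bool) (hf : Measurable f) (hg : Measurable g) (hy : Measurable y)
    (hfacc : (P {ω | f (X ω) = y (X ω)}).toReal ≥ 1 - ε)
    (hgacc : (P {ω | g (X ω) = y (X ω)}).toReal ≥ 1 - ε)
    (hfool : (P {ω | g (X ω) ≠ g (G (X ω))}).toReal ≥ 1 - δ) :
    (P {ω | f (X ω) ≠ f (G (X ω))}).toReal ≥ 1 - δ - 4 * ε - β :=
  stmt0_general P X hX G hG ε δ β hTV f g y hf hg hy hfacc hgacc hfool
end

section
/- Let μ be a σ-finite measure on a measurable space 𝒳, and let p, q : 𝒳 → ℝ be measurable functions with p(x) > 0 and q(x) > 0 for all x. Let D : 𝒳 → ℝ be measurable with 0 < D(x) < 1 for all x. If the functions x ↦ p(x)·log(D(x)) + q(x)·log(1 − D(x)) and x ↦ p(x)·log(p(x)/(p(x)+q(x))) + q(x)·log(q(x)/(p(x)+q(x))) are both μ-integrable, then ∫ (p(x)·log(D(x)) + q(x)·log(1 − D(x))) dμ(x) ≤ ∫ (p(x)·log(p(x)/(p(x)+q(x))) + q(x)·log(q(x)/(p(x)+q(x)))) dμ(x). -/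
open MeasureTheory

lemma key_pointwise (a b t : ℝ) (ha : 0 < a) (hb : 0 < b) (ht0 : 0 < t) (ht1 : t < 1) :
    a * Real.log t + b * Real.log (1 - t) ≤
      a * Real.log (a / (a + b)) + b * Real.log (b / (a + b)) := by
  have hab : 0 < a + b := by linarith
  have h1t : 0 < 1 - t := by linarith
  have h1 : Real.log (t * (a + b) / a) ≤ t * (a + b) / a - 1 :=
    Real.log_le_sub_one_of_pos (by positivity)
  have h2 : Real.log ((1 - t) * (a + b) / b) ≤ (1 - t) * (a + b) / b - 1 :=
    Real.log_le_sub_one_of_pos (by positivity)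
  have e1 : Real.log (t * (a + b) / a) = Real.log t - Real.log (a / (a + b)) := by
    rw [Real.log_div (by positivity) ha.ne', Real.log_mul ht0.ne' hab.ne',
      Real.log_div ha.ne' hab.ne']
    ring
  have e2 : Real.log ((1 - t) * (a + b) / b) =
      Real.log (1 - t) - Real.log (b / (a + b)) := by
    rw [Real.log_div (by positivity) hb.ne', Real.log_mul h1t.ne' hab.ne',
      Real.log_div hb.ne' hab.ne']
    ring
  rw [e1] at h1
  rw [e2] at h2
  have h1' : a * (Real.log t - Real.log (a / (a + b))) ≤ t * (a + b) - a := by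
    have := mul_le_mul_of_nonneg_left h1 ha.le
    calc a * (Real.log t - Real.log (a / (a + b))) ≤ a * (t * (a + b) / a - 1) := this
      _ = t * (a + b) - a := by field_simp
  have h2' : b * (Real.log (1 - t) - Real.log (b / (a + b))) ≤ (1 - t) * (a + b) - b := by
    have := mul_le_mul_of_nonneg_left h2 hb.le
    calc b * (Real.log (1 - t) - Real.log (b / (a + b))) ≤ b * ((1 - t) * (a + b) / b - 1) := this
      _ = (1 - t) * (a + b) - b := by field_simp
  nlinarith [h1', h2']

/-- Integrated optimal-discriminator lemma: for densities `p, q > 0` and any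
discriminator `D` with values in `(0,1)`, the objective
`∫ p·log D + q·log (1 − D) dμ` is at most its value at `D* = p/(p+q)`. -/
theorem stmt4
    {𝒳 : Type*} [MeasurableSpace 𝒳]
    (μ : Measure 𝒳) [SigmaFinite μ]
    (p q : 𝒳 → ℝ) (hp : Measurable p) (hq : Measurable q)
    (hppos : ∀ x, 0 < p x) (hqpos : ∀ x, 0 < q x)
    (D : 𝒳 → ℝ) (hD : Measurable D) (hD0 : ∀ x, 0 < D x) (hD1 : ∀ x, D x < 1)
    (hint1 : Integrable (fun x => p x * Real.log (D x) + q x * Real.log (1 - D x)) μ)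
    (hint2 : Integrable (fun x =>
      p x * Real.log (p x / (p x + q x)) + q x * Real.log (q x / (p x + q x))) μ) :
    ∫ x, (p x * Real.log (D x) + q x * Real.log (1 - D x)) ∂μ ≤
      ∫ x, (p x * Real.log (p x / (p x + q x)) +
        q x * Real.log (q x / (p x + q x))) ∂μ := by
  refine integral_mono hint1 hint2 fun x => ?_
  exact key_pointwise (p x) (q x) (D x) (hppos x) (hqpos x) (hD0 x) (hD1 x)
end

section
/- Let μ be a measure on a measurable space 𝒳, and let p, q : 𝒳 → ℝ be nonnegative measurable μ-integrable functions with ∫ p dμ = 1 and ∫ q dμ = 1. Then ∫ (p(x)·log(p(x)/(p(x)+q(x))) + q(x)·log(q(x)/(p(x)+q(x)))) dμ(x) ≥ −log 4, with equality if and only if p = q μ-almost everywhere (with the convention that a term p(x)·log(p(x)/(p(x)+q(x))) is 0 when p(x) = 0, and likewise for q). -/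
open MeasureTheory

private lemma term_eq' (a s : ℝ) (ha : 0 ≤ a) (hs : 0 < s) :
    a * Real.log (a / s) = a * Real.log a - a * Real.log s := by
  rcases eq_or_lt_of_le ha with h | h
  · simp [← h]
  · rw [Real.log_div h.ne' hs.ne']; ring

/-- The shifted integrand. -/
private noncomputable def Gfun (a b : ℝ) : ℝ :=
  a * Real.log (a / (a + b)) + b * Real.log (b / (a + b)) + (a + b) * Real.log 2

private lemma Gfun_eq (a b : ℝ) (ha : 0 ≤ a) (hb : 0 ≤ b) :
    Gfun a b = (a * Real.log a + b * Real.log b)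
      - 2 * (((a + b) / 2) * Real.log ((a + b) / 2)) := by
  rcases eq_or_lt_of_le (add_nonneg ha hb) with hs | hs
  · have ha0 : a = 0 := by linarith
    have hb0 : b = 0 := by linarith
    simp [Gfun, ha0, hb0]
  · have h2 : Real.log ((a + b) / 2) = Real.log (a + b) - Real.log 2 :=
      Real.log_div hs.ne' two_ne_zero
    rw [Gfun, term_eq' a (a + b) ha hs, term_eq' b (a + b) hb hs, h2]
    ring

private lemma Gfun_nonneg (a b : ℝ) (ha : 0 ≤ a) (hb : 0 ≤ b) : 0 ≤ Gfun a b := by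
  rw [Gfun_eq a b ha hb]
  have := Real.convexOn_mul_log.2 ha hb (by norm_num : (0:ℝ) ≤ 1/2)
    (by norm_num : (0:ℝ) ≤ 1/2) (by norm_num)
  simp only [smul_eq_mul] at this
  have h : (1/2 : ℝ) * a + (1/2 : ℝ) * b = (a + b) / 2 := by ring
  rw [h] at this
  linarith

private lemma Gfun_pos (a b : ℝ) (ha : 0 ≤ a) (hb : 0 ≤ b) (hne : a ≠ b) :
    0 < Gfun a b := by
  rw [Gfun_eq a b ha hb]
  have := Real.strictConvexOn_mul_log.2 ha hb hne
    (by norm_num : (0:ℝ) < 1/2) (by norm_num : (0:ℝ) < 1/2) (by norm_num)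
  simp only [smul_eq_mul] at this
  have h : (1/2 : ℝ) * a + (1/2 : ℝ) * b = (a + b) / 2 := by ring
  rw [h] at this
  linarith

private lemma Gfun_eq_zero_iff (a b : ℝ) (ha : 0 ≤ a) (hb : 0 ≤ b) :
    Gfun a b = 0 ↔ a = b := by
  constructor
  · intro h
    by_contra hne
    exact absurd h (Gfun_pos a b ha hb hne).ne'
  · intro h
    subst h
    rw [Gfun_eq a a ha ha]
    have h : (a + a) / 2 = a := by ring
    rw [h]; ring

private lemma term_nonpos (a b : ℝ) (ha : 0 ≤ a) (hb : 0 ≤ b) :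
    a * Real.log (a / (a + b)) ≤ 0 := by
  rcases eq_or_lt_of_le ha with h | h
  · simp [← h]
  · have hs : 0 < a + b := by linarith
    have h1 : a / (a + b) ≤ 1 := (div_le_one hs).2 (by linarith)
    exact mul_nonpos_of_nonneg_of_nonpos ha
      (Real.log_nonpos (div_nonneg ha hs.le) h1)

private lemma log_four : Real.log 4 = 2 * Real.log 2 := by
  rw [show (4:ℝ) = 2 ^ 2 by norm_num, Real.log_pow]
  norm_num

/-- GAN global-optimality fact: for probability densities `p, q ≥ 0` with respect to a
base measure `μ`, the optimal-discriminator generator objective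
`∫ p·log(p/(p+q)) + q·log(q/(p+q)) dμ` is at least `−log 4`, with equality iff
`p = q` μ-almost everywhere. (Lean's conventions `0 * r = 0` give the stated
convention that a term `p x * log (p x / (p x + q x))` is `0` when `p x = 0`.) -/
theorem stmt5
    {𝒳 : Type*} [MeasurableSpace 𝒳]
    (μ : Measure 𝒳)
    (p q : 𝒳 → ℝ) (hp : Measurable p) (hq : Measurable q)
    (hp0 : ∀ x, 0 ≤ p x) (hq0 : ∀ x, 0 ≤ q x)
    (hpi : Integrable p μ) (hqi : Integrable q μ)
    (hp1 : ∫ x, p x ∂μ = 1) (hq1 : ∫ x, q x ∂μ = 1) :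
    (∫ x, (p x * Real.log (p x / (p x + q x)) +
        q x * Real.log (q x / (p x + q x))) ∂μ ≥ -Real.log 4) ∧
    ((∫ x, (p x * Real.log (p x / (p x + q x)) +
        q x * Real.log (q x / (p x + q x))) ∂μ = -Real.log 4) ↔
      p =ᵐ[μ] q) := by
  set F : 𝒳 → ℝ := fun x => p x * Real.log (p x / (p x + q x)) +
      q x * Real.log (q x / (p x + q x)) with hF
  have hFmeas : Measurable F :=
    (hp.mul ((hp.div (hp.add hq)).log)).add (hq.mul ((hq.div (hp.add hq)).log))
  have hlog2 : (0:ℝ) ≤ Real.log 2 := Real.log_nonneg (by norm_num)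
  have hFle : ∀ x, F x ≤ 0 := fun x =>
    add_nonpos (term_nonpos _ _ (hp0 x) (hq0 x)) (by
      have := term_nonpos (q x) (p x) (hq0 x) (hp0 x)
      rwa [add_comm (q x) (p x)] at this)
  have hFge : ∀ x, -((p x + q x) * Real.log 2) ≤ F x := fun x => by
    have := Gfun_nonneg (p x) (q x) (hp0 x) (hq0 x)
    simp only [Gfun] at this
    simp only [hF]
    linarith
  have hbint : Integrable (fun x => (p x + q x) * Real.log 2) μ :=
    (hpi.add hqi).mul_const _
  have hFint : Integrable F μ := by
    refine hbint.mono' hFmeas.aestronglyMeasurable (ae_of_all _ fun x => ?_)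
    rw [Real.norm_eq_abs, abs_le]
    constructor
    · exact hFge x
    · exact le_trans (hFle x)
        (mul_nonneg (add_nonneg (hp0 x) (hq0 x)) hlog2)
  have hGint : Integrable (fun x => F x + (p x + q x) * Real.log 2) μ :=
    hFint.add hbint
  have hbval : ∫ x, (p x + q x) * Real.log 2 ∂μ = Real.log 4 := by
    rw [integral_mul_const, integral_add hpi hqi, hp1, hq1, log_four]
    ring
  have hGval : ∫ x, (F x + (p x + q x) * Real.log 2) ∂μ
      = (∫ x, F x ∂μ) + Real.log 4 := by
    rw [integral_add hFint hbint, hbval]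
  have hGnn : ∀ x, 0 ≤ F x + (p x + q x) * Real.log 2 := fun x => by
    have := Gfun_nonneg (p x) (q x) (hp0 x) (hq0 x)
    simpa [Gfun, hF] using this
  have hGint_nonneg : 0 ≤ ∫ x, (F x + (p x + q x) * Real.log 2) ∂μ :=
    integral_nonneg hGnn
  constructor
  · show (∫ x, F x ∂μ) ≥ -Real.log 4
    linarith [hGval ▸ hGint_nonneg]
  · constructor
    · intro heq
      have hzero : ∫ x, (F x + (p x + q x) * Real.log 2) ∂μ = 0 := by
        rw [hGval, heq]; ring
      have hae := (integral_eq_zero_iff_of_nonneg hGnn hGint).1 hzero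
      filter_upwards [hae] with x hx
      have : Gfun (p x) (q x) = 0 := by
        simpa [Gfun, hF] using hx
      exact (Gfun_eq_zero_iff _ _ (hp0 x) (hq0 x)).1 this
    · intro hae
      have hG0 : (fun x => F x + (p x + q x) * Real.log 2) =ᵐ[μ] (fun _ => (0:ℝ)) := by
        filter_upwards [hae] with x hx
        have := (Gfun_eq_zero_iff (p x) (q x) (hp0 x) (hq0 x)).2 hx
        simpa [Gfun, hF] using this
      have : ∫ x, (F x + (p x + q x) * Real.log 2) ∂μ = 0 := by
        rw [integral_congr_ae hG0, integral_zero]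
      linarith [hGval ▸ this]
end

section
/- Let Ω be a standard Borel space, π an atomless probability measure on Ω, and p, l : Ω → Bool measurable maps that are balanced, i.e., for every j ∈ Bool, π({x : p(x) = true ∧ l(x) = j}) = π({x : p(x) = false ∧ l(x) = j}). Then there exists a measurable map h : Ω → Ω that is measure preserving for π (π(h⁻¹(A)) = π(A) for every measurable A ⊆ Ω) and satisfies, for π-almost every x, p(h(x)) ≠ p(x) and l(h(x)) = l(x). -/
/-!
Split `Ω` into the four fibres of `(p, l)`. Balance says that each fibre has the same mass as the
fibre obtained by flipping `p`, so it suffices to push `π` restricted to one fibre onto `π`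
restricted to the other by a measurable map, and glue these maps. Such a push-forward exists
between any two finite measures of equal mass on a standard Borel space, the source being
atomless: embed the space into a bounded interval of `ℝ`, where `cdf μ` sends an atomless `μ` to
the uniform distribution, which the quantile function of `ν` sends to `ν`.
-/

open MeasureTheory Set ProbabilityTheory
open scoped ENNReal

theorem continuous_cdf (μ : Measure ℝ) [IsProbabilityMeasure μ] [NullSingletonClass μ] :
    Continuous (cdf μ) := by
  refine continuous_iff_continuousAt.2 fun a ↦
    continuousAt_iff_continuous_left'_right'.2
      ⟨?_, (cdf μ).right_continuous a |>.mono Ioi_subset_Ici_self⟩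
  have h := (cdf μ).measure_singleton a
  rw [measure_cdf, measure_singleton, eq_comm, ENNReal.ofReal_eq_zero, sub_nonpos] at h
  exact (monotone_cdf μ).continuousWithinAt_Iio_iff_leftLim_eq.2
    (le_antisymm ((monotone_cdf μ).leftLim_le le_rfl) h)

theorem measure_cdf_le (μ : Measure ℝ) [IsProbabilityMeasure μ] [NullSingletonClass μ]
    {s : ℝ} (hs₀ : 0 ≤ s) (hs₁ : s ≤ 1) :
    μ {x | cdf μ x ≤ s} = ENNReal.ofReal s := by
  rcases hs₁.eq_or_lt with rfl | hs₁
  · simp [cdf_le_one]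
  set U := {x | cdf μ x ≤ s}
  have hU_bdd : BddAbove U := by
    obtain ⟨b, hb⟩ := ((tendsto_cdf_atTop μ).eventually_const_lt hs₁).exists
    exact ⟨b, fun x hx ↦ not_lt.1 fun hbx ↦ (hb.trans_le (monotone_cdf μ hbx.le)).not_ge hx⟩
  rcases U.eq_empty_or_nonempty with hU | hU
  · obtain rfl : s = 0 := hs₀.antisymm' <| not_lt.1 fun hs ↦ by
      obtain ⟨b, hb⟩ := ((tendsto_cdf_atBot μ).eventually_lt_const hs).exists
      exact hU.subset hb.le
    simp [U, hU]
  have hU_closed : IsClosed U := isClosed_le (continuous_cdf μ) continuous_const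
  set c := sSup U
  have hc : cdf μ c = s := by
    refine le_antisymm (hU_closed.csSup_mem hU hU_bdd) (not_lt.1 fun hlt ↦ ?_)
    obtain ⟨d, hcd, hd⟩ :=
      ((continuous_cdf μ).continuousAt.eventually_lt continuousAt_const hlt).exists_gt
    exact hcd.not_ge (le_csSup hU_bdd hd.le)
  have : U = Iic c := Subset.antisymm (fun x hx ↦ le_csSup hU_bdd hx)
    fun x hx ↦ (monotone_cdf μ hx).trans hc.le
  rw [this, ← ofReal_cdf, hc]

theorem exists_measurePreserving_of_ae_mem_Icc (μ ν : Measure ℝ) [IsProbabilityMeasure μ]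
    [IsProbabilityMeasure ν] [NullSingletonClass μ] {a b : ℝ} (hν : ∀ᵐ y ∂ν, y ∈ Icc a b) :
    ∃ f : ℝ → ℝ, MeasurePreserving f μ ν := by
  have hab : a ≤ b := by
    obtain ⟨y, hy⟩ := hν.exists
    exact hy.1.trans hy.2
  have hν' : ν (Icc a b)ᶜ = 0 := ae_iff.1 hν
  have hb : cdf ν b = 1 := by
    rw [← ENNReal.ofReal_eq_one, ofReal_cdf, ← prob_compl_eq_zero_iff measurableSet_Iic]
    exact measure_mono_null (compl_subset_compl.2 fun _ hy ↦ hy.2) hν'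
  -- `f` is the quantile function of `ν`, restricted to `[a, ∞)`, composed with `cdf μ`
  set S : ℝ → Set ℝ := fun x ↦ {y | a ≤ y ∧ cdf μ x ≤ cdf ν y}
  have hbS (x : ℝ) : b ∈ S x := ⟨hab, hb ▸ cdf_le_one μ x⟩
  have hS_bdd (x : ℝ) : BddBelow (S x) := ⟨a, fun _ hy ↦ hy.1⟩
  set f : ℝ → ℝ := fun x ↦ sInf (S x)
  have hf_mono : Monotone f := fun x₁ x₂ hx ↦ csInf_le_csInf (hS_bdd x₁) ⟨b, hbS x₂⟩
    fun y hy ↦ ⟨hy.1, (monotone_cdf μ hx).trans hy.2⟩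
  have hf_ge (x : ℝ) : a ≤ f x := le_csInf ⟨b, hbS x⟩ fun _ hy ↦ hy.1
  have hf_mem (x : ℝ) : f x ∈ S x := by
    refine ⟨hf_ge x, ?_⟩
    rw [(monotone_cdf ν).monotoneOn _ |>.map_csInf_of_continuousWithinAt
      ((cdf ν).right_continuous _ |>.mono fun y hy ↦ csInf_le (hS_bdd x) hy) ⟨b, hbS x⟩ (hS_bdd x)]
    exact le_csInf (Nonempty.image _ ⟨b, hbS x⟩) (by rintro _ ⟨y, hy, rfl⟩; exact hy.2)
  have hf_le_iff (x y : ℝ) (hy : a ≤ y) : f x ≤ y ↔ cdf μ x ≤ cdf ν y :=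
    ⟨fun h ↦ (hf_mem x).2.trans (monotone_cdf ν h), fun h ↦ csInf_le (hS_bdd x) ⟨hy, h⟩⟩
  refine ⟨f, hf_mono.measurable, Measure.ext_of_Iic _ _ fun y ↦ ?_⟩
  rw [Measure.map_apply hf_mono.measurable measurableSet_Iic]
  rcases lt_or_ge y a with hy | hy
  · have : f ⁻¹' Iic y = ∅ :=
      eq_empty_of_forall_notMem fun x hx ↦ (hy.trans_le (hf_ge x)).not_ge hx
    rw [this, measure_empty, eq_comm]
    exact measure_mono_null (by exact fun z hz hzab ↦ hy.not_ge (hzab.1.trans hz)) hν'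
  · rw [← ofReal_cdf]
    have : f ⁻¹' Iic y = {x | cdf μ x ≤ cdf ν y} := by ext x; exact hf_le_iff x y hy
    rw [this, measure_cdf_le μ (cdf_nonneg ν y) (cdf_le_one ν y)]

theorem exists_measurePreserving_of_isProbabilityMeasure {Ω : Type*} [MeasurableSpace Ω]
    [StandardBorelSpace Ω] (μ ν : Measure Ω) [IsProbabilityMeasure μ] [IsProbabilityMeasure ν]
    [NullSingletonClass μ] :
    ∃ f : Ω → Ω, MeasurePreserving f μ ν := by
  have := nonempty_of_isProbabilityMeasure μ
  obtain ⟨e₀, he₀⟩ := exists_measurableEmbedding_real Ω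
  -- squeeze the embedding into a bounded interval, where the quantile transport applies
  have he : MeasurableEmbedding (Real.arctan ∘ e₀) :=
    (Real.continuous_arctan.measurable.measurableEmbedding Real.arctan_injective).comp he₀
  set e := Real.arctan ∘ e₀
  obtain ⟨g, hg, hge⟩ := he.exists_measurable_extend measurable_id fun _ ↦ ‹Nonempty Ω›
  have : IsProbabilityMeasure (μ.map e) :=
    Measure.isProbabilityMeasure_map he.measurable.aemeasurable
  have : IsProbabilityMeasure (ν.map e) :=
    Measure.isProbabilityMeasure_map he.measurable.aemeasurable
  have : NullSingletonClass (μ.map e) := ⟨fun y ↦ by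
    rw [Measure.map_apply he.measurable (measurableSet_singleton y)]
    exact (subsingleton_singleton.preimage he.injective).measure_zero μ⟩
  have he_mem : ∀ᵐ y ∂ν.map e, y ∈ Icc (-(Real.pi / 2)) (Real.pi / 2) :=
    (ae_map_iff he.measurable.aemeasurable measurableSet_Icc).2 <| ae_of_all _ fun x ↦
      ⟨(Real.neg_pi_div_two_lt_arctan _).le, (Real.arctan_lt_pi_div_two _).le⟩
  obtain ⟨f, hf⟩ := exists_measurePreserving_of_ae_mem_Icc (μ.map e) (ν.map e) he_mem
  have hg' : MeasurePreserving g (ν.map e) ν :=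
    ⟨hg, by rw [Measure.map_map hg he.measurable, hge, Measure.map_id]⟩
  exact ⟨g ∘ f ∘ e, hg'.comp (hf.comp (he.measurable.measurePreserving μ))⟩

theorem exists_measurePreserving_of_measure_univ_eq {Ω : Type*} [MeasurableSpace Ω]
    [StandardBorelSpace Ω] (μ ν : Measure Ω) [IsFiniteMeasure μ] [IsFiniteMeasure ν]
    [NullSingletonClass μ] (hμν : μ univ = ν univ) :
    ∃ f : Ω → Ω, MeasurePreserving f μ ν := by
  rcases eq_zero_or_neZero μ with rfl | hμ
  · refine ⟨id, measurable_id, ?_⟩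
    rw [Measure.map_id, eq_comm, ← Measure.measure_univ_eq_zero, ← hμν, Measure.coe_zero,
      Pi.zero_apply]
  have : NeZero ν := ⟨by rw [← Measure.measure_univ_ne_zero, ← hμν]; exact NeZero.ne _⟩
  have : NullSingletonClass ((μ univ)⁻¹ • μ) := ⟨fun x ↦ by simp⟩
  obtain ⟨f, hf, hmap⟩ :=
    exists_measurePreserving_of_isProbabilityMeasure ((μ univ)⁻¹ • μ) ((ν univ)⁻¹ • ν)
  refine ⟨f, hf, ?_⟩
  have hc₀ : μ univ ≠ 0 := Measure.measure_univ_ne_zero.2 hμ.out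
  have hc : μ univ ≠ ∞ := measure_ne_top μ univ
  calc μ.map f = μ univ • ((μ univ)⁻¹ • μ).map f := by
        rw [Measure.map_smul, smul_smul, ENNReal.mul_inv_cancel hc₀ hc, one_smul]
    _ = ν := by rw [hmap, ← hμν, smul_smul, ENNReal.mul_inv_cancel hc₀ hc, one_smul]

theorem exists_measurePreserving_ae_comp_eq_perm_comp {Ω ι : Type*} [MeasurableSpace Ω]
    [StandardBorelSpace Ω] [MeasurableSpace ι] [Countable ι] [MeasurableSingletonClass ι]
    (π : Measure Ω) [IsFiniteMeasure π] [NullSingletonClass π] {k : Ω → ι} (hk : Measurable k)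
    (σ : Equiv.Perm ι) (hσ : ∀ i, π (k ⁻¹' {σ i}) = π (k ⁻¹' {i})) :
    ∃ h : Ω → Ω, MeasurePreserving h π π ∧ ∀ᵐ x ∂π, k (h x) = σ (k x) := by
  set S : ι → Set Ω := fun i ↦ k ⁻¹' {i}
  have hS (i : ι) : MeasurableSet (S i) := hk (measurableSet_singleton i)
  have hπ : Measure.sum (fun i ↦ π.restrict (S i)) = π := by
    rw [← Measure.restrict_iUnion (pairwise_disjoint_fiber k) hS, ← preimage_iUnion,
      iUnion_of_singleton, preimage_univ, Measure.restrict_univ]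
  have (i : ι) : ∃ φ : Ω → Ω, MeasurePreserving φ (π.restrict (S i)) (π.restrict (S (σ i))) :=
    exists_measurePreserving_of_measure_univ_eq _ _ <| by
      simp only [Measure.restrict_apply_univ, S, hσ]
  choose φ hφ using this
  set h : Ω → Ω := fun x ↦ φ (k x) x
  have hh : Measurable h :=
    (measurable_from_prod_countable_left (f := fun q : Ω × ι ↦ φ q.2 q.1)
      fun i ↦ (hφ i).measurable).comp (measurable_id.prodMk hk)
  have h_ae_eq (i : ι) : h =ᵐ[π.restrict (S i)] φ i :=
    (ae_restrict_mem (hS i)).mono fun x (hx : k x = i) ↦ by simp only [h, hx]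
  refine ⟨h, ⟨hh, ?_⟩, ?_⟩
  · calc π.map h = Measure.sum fun i ↦ (π.restrict (S i)).map h := by
          rw [← Measure.map_sum (hπ ▸ hh.aemeasurable), hπ]
      _ = Measure.sum fun i ↦ π.restrict (S (σ i)) := by
          congr with i : 1
          rw [Measure.map_congr (h_ae_eq i), (hφ i).map_eq]
      _ = π := (Measure.sum_comp_equiv σ fun i ↦ π.restrict (S i)).trans hπ
  · rw [← hπ, Measure.ae_sum_iff]
    intro i
    have hφ_mem : ∀ᵐ x ∂π.restrict (S i), φ i x ∈ S (σ i) :=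
      (hφ i).quasiMeasurePreserving.ae (ae_restrict_mem (hS (σ i)))
    filter_upwards [h_ae_eq i, ae_restrict_mem (hS i), hφ_mem] with x hhx (hx : k x = i) hφx
    rw [hhx, hx]
    exact hφx

/-- The other direction of Lemma 3: on an atomless standard Borel probability space,
if the classifiers `p` and `l` are balanced, then there exists a measurable,
measure preserving map `h` that, almost everywhere, flips the sensitive label `p`
and preserves the target label `l`. -/
theorem stmt7
    {Ω : Type*} [MeasurableSpace Ω] [StandardBorelSpace Ω]
    (π : Measure Ω) [IsProbabilityMeasure π] [NullSingletonClass π]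
    (p l : Ω → Bool) (hp : Measurable p) (hl : Measurable l)
    (hbal : ∀ j : Bool,
      π {x | p x = true ∧ l x = j} = π {x | p x = false ∧ l x = j}) :
    ∃ h : Ω → Ω, Measurable h ∧
      (∀ A : Set Ω, MeasurableSet A → π (h ⁻¹' A) = π A) ∧
      (∀ᵐ x ∂π, p (h x) ≠ p x ∧ l (h x) = l x) := by
  have hfiber (i j : Bool) : (fun x ↦ (p x, l x)) ⁻¹' {(i, j)} = {x | p x = i ∧ l x = j} := by
    ext x; simp
  obtain ⟨h, hh, hae⟩ := exists_measurePreserving_ae_comp_eq_perm_comp π (hp.prodMk hl)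
    (Equiv.boolNot.prodCongr (Equiv.refl Bool)) fun ⟨i, j⟩ ↦ by
      cases i <;> simp [hfiber, hbal]
  refine ⟨h, hh.measurable, fun A hA ↦ hh.measure_preimage hA.nullMeasurableSet,
    hae.mono fun x hx ↦ ?_⟩
  simp only [Equiv.prodCongr_apply, Prod.map, Prod.mk.injEq] at hx
  exact ⟨hx.1 ▸ Bool.not_ne_self (p x), hx.2⟩
end
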